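/- arXiv:2202.03628 — 3 statements merged into one kernel-verified Lean document; each statement's English description precedes it below -/
import Mathlib

section
/- Let N ≥ 2 and consider a star graph on domains {1,...,N} with domain 1 as center, so A_{1j} = A_{j1} = 1 for j ≥ 2 and all other entries 0. Suppose each domain has equal probability 1/N and let βᵢ(e) = pᵢ(e)/p(e) be density ratios with ∑ᵢ βᵢ(e) = N for every e. If for all pairs of encodings (e,e'), (1/N²)·∑_{j=2}^{N} (β₁(e)βⱼ(e') + β₁(e')βⱼ(e)) = 2(N-1)/N², then β₁(e) is constant in e and equals either 1 or N-1; and if additionally E_e[β₁(e)] = 1, then β₁(e) = 1 for all e, i.e., p₁(e) = (1/(N-1))·∑_{j=2}^{N} pⱼ(e). -/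
/-! Writing `b = β 0`, the peripheral ratios sum to `N - b`, so the optimality condition reads
`b e (N - b e') + b e' (N - b e) = 2 (N - 1)`. On the diagonal this is the quadratic
`b (N - b) = N - 1` with roots `1` and `N - 1`; subtracting the two diagonal instances from the
mixed one leaves `(b e - b e')² = 0`, so `b` is constant and its mean fixes the root. -/

open MeasureTheory Finset

lemma eq_one_or_eq_sub_one_of_mul_sub_self {K x : ℝ} (h : x * (K - x) = K - 1) :
    x = 1 ∨ x = K - 1 := by
  have hroots : (x - 1) * (x - (K - 1)) = 0 := by linear_combination -h
  exact (mul_eq_zero.1 hroots).imp sub_eq_zero.1 sub_eq_zero.1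

lemma eq_of_mul_sub_add_mul_sub_eq {K c x y : ℝ} (hx : x * (K - x) = c) (hy : y * (K - y) = c)
    (hxy : x * (K - y) + y * (K - x) = 2 * c) : x = y := by
  have hsq : (x - y) ^ 2 = 0 := by linear_combination hxy - hx - hy
  exact sub_eq_zero.1 (pow_eq_zero_iff two_ne_zero |>.1 hsq)

lemma integral_eq_of_forall_eq {Ω : Type*} [MeasurableSpace Ω] (μ : Measure Ω)
    [IsProbabilityMeasure μ] {f : Ω → ℝ} (hf : ∀ x y, f x = f y) (x : Ω) :
    ∫ y, f y ∂μ = f x := by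
  rw [integral_congr_ae (ae_of_all _ fun y => hf y x), integral_const, probReal_univ, one_smul]

section StarGraph

variable {Ω : Type*} {N : ℕ} {β : ℕ → Ω → ℝ}

lemma sum_Ico_one_ratio_eq (hN : 0 < N) (hsum : ∀ e, ∑ i ∈ range N, β i e = (N : ℝ)) (e : Ω) :
    ∑ j ∈ Ico 1 N, β j e = N - β 0 e :=
  eq_sub_of_add_eq' ((sum_range_eq_add_Ico _ hN).symm.trans (hsum e))

lemma star_cross_sum_eq (hN : 0 < N) (hsum : ∀ e, ∑ i ∈ range N, β i e = (N : ℝ)) (e e' : Ω) :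
    ∑ j ∈ Ico 1 N, (β 0 e * β j e' + β 0 e' * β j e)
      = β 0 e * (N - β 0 e') + β 0 e' * (N - β 0 e) := by
  rw [sum_add_distrib, ← mul_sum, ← mul_sum, sum_Ico_one_ratio_eq hN hsum,
    sum_Ico_one_ratio_eq hN hsum]

lemma sum_Ico_one_density_eq {p : ℕ → Ω → ℝ} {pbar : Ω → ℝ} (hN : 0 < N)
    (hpos : ∀ e, 0 < pbar e) (hβ : ∀ i e, β i e = p i e / pbar e)
    (hsum : ∀ e, ∑ i ∈ range N, β i e = (N : ℝ)) (e : Ω) :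
    ∑ j ∈ Ico 1 N, p j e = (N - β 0 e) * pbar e := by
  have hp : ∀ j, p j e = β j e * pbar e := fun j => by
    rw [hβ, div_mul_cancel₀ _ (hpos e).ne']
  simp_rw [hp, ← sum_mul, sum_Ico_one_ratio_eq hN hsum]

end StarGraph

theorem star_graph_optimum_general {Ω : Type*} [MeasurableSpace Ω]
    (μ : Measure Ω) [IsProbabilityMeasure μ]
    (N : ℕ) (hN : 2 ≤ N)
    (p : ℕ → Ω → ℝ) (pbar : Ω → ℝ)
    (hpos : ∀ e, 0 < pbar e)
    (β : ℕ → Ω → ℝ) (hβ : ∀ i e, β i e = p i e / pbar e)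
    (hsum : ∀ e, ∑ i ∈ Finset.range N, β i e = (N : ℝ))
    (hopt : ∀ e e' : Ω,
      (1 / (N : ℝ) ^ 2) * ∑ j ∈ Finset.Ico 1 N, (β 0 e * β j e' + β 0 e' * β j e)
        = 2 * ((N : ℝ) - 1) / (N : ℝ) ^ 2) :
    (∃ c : ℝ, (∀ e, β 0 e = c) ∧ (c = 1 ∨ c = (N : ℝ) - 1)) ∧
      ((∫ e, β 0 e ∂μ) = 1 →
        ∀ e, β 0 e = 1 ∧ p 0 e = (1 / ((N : ℝ) - 1)) * ∑ j ∈ Finset.Ico 1 N, p j e) := by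
  have hN0 : 0 < N := by omega
  have hN1 : (N : ℝ) - 1 ≠ 0 := by
    have : (2 : ℝ) ≤ N := by exact_mod_cast hN
    linarith
  have hcross : ∀ e e', β 0 e * (N - β 0 e') + β 0 e' * (N - β 0 e) = 2 * (N - 1) := by
    intro e e'
    have h := hopt e e'
    rw [star_cross_sum_eq hN0 hsum] at h
    field_simp at h
    linarith
  have hdiag : ∀ e, β 0 e * (N - β 0 e) = N - 1 := fun e => by linarith [hcross e e]
  have hconst : ∀ e e', β 0 e = β 0 e' := fun e e' =>
    eq_of_mul_sub_add_mul_sub_eq (hdiag e) (hdiag e') (hcross e e')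
  obtain ⟨e₀⟩ : Nonempty Ω := μ.nonempty_of_neZero
  refine ⟨⟨β 0 e₀, fun e => hconst e e₀, eq_one_or_eq_sub_one_of_mul_sub_self (hdiag e₀)⟩,
    fun hmean e => ?_⟩
  have hb : β 0 e = 1 := (integral_eq_of_forall_eq μ hconst e).symm.trans hmean
  refine ⟨hb, ?_⟩
  have hp0 : p 0 e = pbar e := by rwa [hβ, div_eq_one_iff_eq (hpos e).ne'] at hb
  rw [sum_Ico_one_density_eq hN0 hpos hβ hsum, hb, hp0]
  field_simp

theorem star_graph_optimum {Ω : Type*} [MeasurableSpace Ω]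
    (μ : Measure Ω) [IsProbabilityMeasure μ]
    (N : ℕ) (hN : 2 ≤ N)
    (p : ℕ → Ω → ℝ) (pbar : Ω → ℝ)
    (hpbar : ∀ e, pbar e = (1 / (N : ℝ)) * ∑ i ∈ Finset.range N, p i e)
    (hpos : ∀ e, 0 < pbar e)
    (β : ℕ → Ω → ℝ) (hβ : ∀ i e, β i e = p i e / pbar e)
    (hsum : ∀ e, ∑ i ∈ Finset.range N, β i e = (N : ℝ))
    (hopt : ∀ e e' : Ω,
      (1 / (N : ℝ) ^ 2) * ∑ j ∈ Finset.Ico 1 N, (β 0 e * β j e' + β 0 e' * β j e)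
        = 2 * ((N : ℝ) - 1) / (N : ℝ) ^ 2) :
    (∃ c : ℝ, (∀ e, β 0 e = c) ∧ (c = 1 ∨ c = (N : ℝ) - 1)) ∧
      ((∫ e, β 0 e ∂μ) = 1 →
        ∀ e, β 0 e = 1 ∧ p 0 e = (1 / ((N : ℝ) - 1)) * ∑ j ∈ Finset.Ico 1 N, p j e) :=
  star_graph_optimum_general μ N hN p pbar hpos β hβ hsum hopt
end

section
/- Consider a chain graph on 3 domains (domain 2 connected to domains 1 and 3, no other edges), each with probability 1/3, and density ratios βᵢ(e) = pᵢ(e)/p(e) satisfying β₁(e)+β₂(e)+β₃(e) = 3 for all e. The condition that for all e, e': β₂(e)(β₁(e')+β₃(e')) + β₂(e')(β₁(e)+β₃(e)) = 4, together with E_e[β₂(e)] = 1, holds if and only if β₂(e) = 1 for all e, i.e., p₂(e) = (1/2)(p₁(e)+p₃(e)) for all e. -/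
/-!
Since `β₁ + β₃ = 3 - β₂`, the pairwise condition reads `c(e) c(e') = 1` for `c = 2β₂ - 3`,
which forces `β₂ ≡ 1` or `β₂ ≡ 2`; the mean condition `E[β₂] = 1` rules out the second.
Finally `β₂(e) = 1` means `p₂(e) = p̄(e) = (p₁(e) + p₂(e) + p₃(e)) / 3`, i.e. `p₂ = (p₁ + p₃) / 2`.
-/

open MeasureTheory

theorem forall_mul_eq_one_iff_eq_one_or_eq_neg_one {α R : Type*} [CommRing R] [NoZeroDivisors R]
    (c : α → R) : (∀ x y, c x * c y = 1) ↔ (∀ x, c x = 1) ∨ (∀ x, c x = -1) := by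
  constructor
  · intro h
    by_cases hone : ∀ x, c x = 1
    · exact Or.inl hone
    push Not at hone
    obtain ⟨x₀, hx₀⟩ := hone
    have hneg : c x₀ = -1 := (mul_self_eq_one_iff.mp (h x₀ x₀)).resolve_left hx₀
    refine Or.inr fun y => ?_
    have := h x₀ y
    rw [hneg] at this
    linear_combination -this
  · rintro (h | h) x y <;> simp [h]

theorem chain_condition_iff {α : Type*} (b : α → ℝ) :
    (∀ x y, b x * (3 - b y) + b y * (3 - b x) = 4) ↔ (∀ x, b x = 1) ∨ (∀ x, b x = 2) := by
  have hc : ∀ x y, b x * (3 - b y) + b y * (3 - b x) = 4 ↔ (2 * b x - 3) * (2 * b y - 3) = 1 :=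
    fun x y => ⟨fun h => by linear_combination (-2) * h, fun h => by linear_combination (-1 / 2) * h⟩
  simp_rw [hc]
  rw [forall_mul_eq_one_iff_eq_one_or_eq_neg_one (fun x => 2 * b x - 3), or_comm]
  refine or_congr (forall_congr' fun x => ?_) (forall_congr' fun x => ?_) <;>
    constructor <;> intro h <;> linarith

theorem chain_three_nodes_general {Ω : Type*} [MeasurableSpace Ω]
    (μ : Measure Ω) [IsProbabilityMeasure μ]
    (p1 p2 p3 : Ω → ℝ) (pbar : Ω → ℝ)
    (hpbar : ∀ e, pbar e = (p1 e + p2 e + p3 e) / 3)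
    (hpos : ∀ e, 0 < pbar e)
    (β1 β2 β3 : Ω → ℝ)
    (hβ2 : ∀ e, β2 e = p2 e / pbar e)
    (hsum : ∀ e, β1 e + β2 e + β3 e = 3) :
    ((∀ e e' : Ω, β2 e * (β1 e' + β3 e') + β2 e' * (β1 e + β3 e) = 4) ∧
        (∫ e, β2 e ∂μ) = 1) ↔
      ((∀ e, β2 e = 1) ∧ (∀ e, p2 e = (p1 e + p3 e) / 2)) := by
  have hrest : ∀ e, β1 e + β3 e = 3 - β2 e := fun e => by linarith [hsum e]
  have hmid : ∀ e, β2 e = 1 → p2 e = (p1 e + p3 e) / 2 := fun e h => by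
    rw [hβ2, div_eq_one_iff_eq (hpos e).ne', hpbar] at h
    linarith
  simp only [hrest, chain_condition_iff]
  constructor
  · rintro ⟨hone | htwo, hint⟩
    · exact ⟨hone, fun e => hmid e (hone e)⟩
    · norm_num [htwo] at hint
  · rintro ⟨hone, -⟩
    exact ⟨Or.inl hone, by simp [hone]⟩

theorem chain_three_nodes {Ω : Type*} [MeasurableSpace Ω]
    (μ : Measure Ω) [IsProbabilityMeasure μ]
    (p1 p2 p3 : Ω → ℝ) (pbar : Ω → ℝ)
    (hpbar : ∀ e, pbar e = (p1 e + p2 e + p3 e) / 3)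
    (hpos : ∀ e, 0 < pbar e)
    (β1 β2 β3 : Ω → ℝ)
    (hβ1 : ∀ e, β1 e = p1 e / pbar e)
    (hβ2 : ∀ e, β2 e = p2 e / pbar e)
    (hβ3 : ∀ e, β3 e = p3 e / pbar e)
    (hsum : ∀ e, β1 e + β2 e + β3 e = 3) :
    ((∀ e e' : Ω, β2 e * (β1 e' + β3 e') + β2 e' * (β1 e + β3 e) = 4) ∧
        (∫ e, β2 e ∂μ) = 1) ↔
      ((∀ e, β2 e = 1) ∧ (∀ e, p2 e = (p1 e + p3 e) / 2)) :=
  chain_three_nodes_general μ p1 p2 p3 pbar hpbar hpos β1 β2 β3 hβ2 hsum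
end

section
/- Let N ≥ 2 and let the clique adjacency matrix A on {1,...,N} have A_{ij} = 1 for i ≠ j and A_{ii} = 0, with domains equiprobable. Suppose nonnegative functions βᵢ(e) satisfy ∑ᵢ βᵢ(e) = N for all e. If for all pairs (e,e'), ∑_{i≠j} βᵢ(e)βⱼ(e') = N(N-1), then βᵢ(e) = 1 for all i and e. -/
/-! Taking `e' = e`, the off-diagonal sum is `(∑ βᵢ)² - ∑ βᵢ² = N² - ∑ βᵢ²`, so the optimality
condition says `∑ βᵢ² = N`. Together with `∑ βᵢ = N` this gives `∑ (βᵢ - 1)² = 0`. -/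

open Finset

theorem Finset.sum_sum_filter_ne_mul {α R : Type*} [DecidableEq α] [CommRing R]
    (s : Finset α) (f g : α → R) :
    ∑ i ∈ s, ∑ j ∈ s.filter (fun j => j ≠ i), f i * g j
      = (∑ i ∈ s, f i) * (∑ j ∈ s, g j) - ∑ i ∈ s, f i * g i := by
  have row : ∀ i ∈ s, ∑ j ∈ s.filter (fun j => j ≠ i), f i * g j
      = f i * (∑ j ∈ s, g j) - f i * g i := by
    intro i hi
    rw [filter_ne', ← mul_sum, sum_erase_eq_sub hi, mul_sub]
  rw [sum_congr rfl row, sum_sub_distrib, sum_mul]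

theorem Finset.eq_one_of_sum_eq_card_of_sum_sq_eq_card {α : Type*} (s : Finset α) (f : α → ℝ)
    (hsum : ∑ i ∈ s, f i = #s) (hsq : ∑ i ∈ s, f i ^ 2 = #s) :
    ∀ i ∈ s, f i = 1 := by
  have hzero : ∑ i ∈ s, (f i - 1) ^ 2 = 0 := by
    calc ∑ i ∈ s, (f i - 1) ^ 2 = ∑ i ∈ s, f i ^ 2 - 2 * ∑ i ∈ s, f i + #s := by
          simp only [sub_sq, one_pow, mul_one, sum_add_distrib, sum_sub_distrib, ← mul_sum,
            sum_const, nsmul_eq_mul, mul_one]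
      _ = 0 := by rw [hsum, hsq]; ring
  intro i hi
  have := (sum_eq_zero_iff_of_nonneg (fun j _ => sq_nonneg (f j - 1))).mp hzero i hi
  rwa [sq_eq_zero_iff, sub_eq_zero] at this

theorem clique_corollary_general {Ω : Type*} (N : ℕ)
    (β : Ω → ℕ → ℝ)
    (hsum : ∀ e, ∑ i ∈ Finset.range N, β e i = (N : ℝ))
    (hopt : ∀ e e' : Ω,
      ∑ i ∈ Finset.range N, ∑ j ∈ (Finset.range N).filter (fun j => j ≠ i),
        β e i * β e' j = (N : ℝ) * ((N : ℝ) - 1)) :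
    ∀ e : Ω, ∀ i ∈ Finset.range N, β e i = 1 := by
  intro e
  have hsq : ∑ i ∈ range N, β e i ^ 2 = N := by
    have h := hopt e e
    rw [sum_sum_filter_ne_mul, hsum] at h
    simp only [← sq] at h
    linarith
  exact eq_one_of_sum_eq_card_of_sum_sq_eq_card _ _
    (by rw [card_range, hsum]) (by rw [card_range, hsq])

theorem clique_corollary {Ω : Type*} (N : ℕ) (hN : 2 ≤ N)
    (β : Ω → ℕ → ℝ)
    (hnn : ∀ e i, 0 ≤ β e i)
    (hsum : ∀ e, ∑ i ∈ Finset.range N, β e i = (N : ℝ))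
    (hopt : ∀ e e' : Ω,
      ∑ i ∈ Finset.range N, ∑ j ∈ (Finset.range N).filter (fun j => j ≠ i),
        β e i * β e' j = (N : ℝ) * ((N : ℝ) - 1)) :
    ∀ e : Ω, ∀ i ∈ Finset.range N, β e i = 1 :=
  clique_corollary_general N β hsum hopt
end
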